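/- arXiv:2207.14805 — 2 statements merged into one kernel-verified Lean document; each statement's English description precedes it below -/
import Mathlib

section
/- Let (T, c_∧) be a partially ordered algebraic tree with partial order x ≤ y iff x = c_∧(x,y). Define c(x,y,z) := max{c_∧(x,y), c_∧(x,z), c_∧(y,z)} (which exists by (M3)). Then (T,c) is an algebraic tree satisfying (2pc), (3pc), (4pc). -/
/-!
Since `c_∧` is idempotent, commutative and associative, `T` is a meet-semilattice, and (M3) says
that two of the three pairwise meets of any `x, y, z` coincide. Consequently every down-set
`{y | y ≤ x}` is a chain, and meets are isosceles: `a ⊓ b < a ⊓ c` forces `b ⊓ c = a ⊓ b`.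
The pairwise meet that differs from the other two is then their maximum `c(x, y, z)`, and the
axioms (2pc), (3pc) follow from the uniqueness of a greatest element. For (4pc) we may assume by
symmetry that `c(x₁, x₂, x₃) = x₁ ⊓ x₂`; if `x₄` leaves the subtree below this point, say
`x₁ ⊓ x₄ > x₁ ⊓ x₂`, the isosceles property gives `c(x₂, x₃, x₄) = x₁ ⊓ x₂`.
-/

/-- The first half of axiom (M3); the second half holds in every meet-semilattice. -/
class IsMeetTree (α : Type*) [SemilatticeInf α] : Prop where
  inf_eq_or_inf_eq_or_inf_eq (x y z : α) : x ⊓ y = x ⊓ z ∨ x ⊓ y = y ⊓ z ∨ x ⊓ z = y ⊓ z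

section SemilatticeInf

variable {α : Type*} [SemilatticeInf α] {a b c m : α}

theorem isGreatest_triple_iff :
    IsGreatest {a, b, c} m ↔ (m = a ∨ m = b ∨ m = c) ∧ a ≤ m ∧ b ≤ m ∧ c ≤ m := by
  simp only [IsGreatest, upperBounds, Set.mem_insert_iff, Set.mem_singleton_iff,
    Set.mem_ofPred_eq, forall_eq_or_imp, forall_eq]

theorem isGreatest_of_inf_eq (h : a ⊓ b = a ⊓ c) : IsGreatest {a ⊓ b, a ⊓ c, b ⊓ c} (b ⊓ c) := by
  have hle : a ⊓ b ≤ b ⊓ c := le_inf inf_le_right (h ▸ inf_le_right)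
  exact isGreatest_triple_iff.2 ⟨by tauto, hle, h ▸ hle, le_rfl⟩

open Classical in
noncomputable def branchPoint (x y z : α) : α :=
  if x ⊓ y = x ⊓ z then y ⊓ z else if x ⊓ y = y ⊓ z then x ⊓ z else x ⊓ y

end SemilatticeInf

section IsMeetTree

variable {α : Type*} [SemilatticeInf α] [IsMeetTree α] {a b c d m : α}

namespace IsMeetTree

theorem le_total_of_le (hb : b ≤ a) (hc : c ≤ a) : b ≤ c ∨ c ≤ b := by
  rcases inf_eq_or_inf_eq_or_inf_eq a b c with h | h | h <;>
    simp only [inf_eq_right.2 hb, inf_eq_right.2 hc] at h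
  · exact Or.inl h.le
  · exact Or.inl (left_eq_inf.1 h)
  · exact Or.inr (right_eq_inf.1 h)

theorem inf_eq_of_inf_lt (h : a ⊓ b < a ⊓ c) : b ⊓ c = a ⊓ b := by
  rcases inf_eq_or_inf_eq_or_inf_eq a b c with h' | h' | h'
  · exact absurd h' h.ne
  · exact h'.symm
  · exact absurd (le_inf inf_le_left (h' ▸ inf_le_left)) h.not_ge

end IsMeetTree

open IsMeetTree

theorem isGreatest_branchPoint (x y z : α) :
    IsGreatest {x ⊓ y, x ⊓ z, y ⊓ z} (branchPoint x y z) := by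
  unfold branchPoint
  split_ifs with h₁ h₂
  · exact isGreatest_of_inf_eq h₁
  · have h := isGreatest_of_inf_eq (show y ⊓ x = y ⊓ z by rwa [inf_comm])
    rwa [inf_comm y x, Set.pair_comm] at h
  · have h₃ : z ⊓ x = z ⊓ y := by
      rw [inf_comm z, inf_comm z]
      exact (inf_eq_or_inf_eq_or_inf_eq x y z).resolve_left h₁ |>.resolve_left h₂
    have h := isGreatest_of_inf_eq h₃
    rwa [inf_comm z x, inf_comm z y, Set.pair_comm, Set.insert_comm] at h

theorem branchPoint_eq_of_isGreatest {x y z : α} (h : IsGreatest {x ⊓ y, x ⊓ z, y ⊓ z} m) :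
    branchPoint x y z = m :=
  (isGreatest_branchPoint x y z).unique h

theorem branchPoint_comm (x y z : α) : branchPoint x y z = branchPoint y x z := by
  refine branchPoint_eq_of_isGreatest ?_
  have h := isGreatest_branchPoint y x z
  rwa [inf_comm y x, Set.pair_comm] at h

theorem branchPoint_comm_right (x y z : α) : branchPoint x y z = branchPoint x z y := by
  refine branchPoint_eq_of_isGreatest ?_
  have h := isGreatest_branchPoint x z y
  rwa [inf_comm z y, Set.insert_comm] at h

theorem branchPoint_self_right (x y : α) : branchPoint x y y = y :=
  branchPoint_eq_of_isGreatest <|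
    isGreatest_triple_iff.2 ⟨by simp, inf_le_right, inf_le_right, inf_le_right⟩

theorem branchPoint_branchPoint (x y z : α) :
    branchPoint x y (branchPoint x y z) = branchPoint x y z := by
  obtain ⟨hm, hxy, -, -⟩ := isGreatest_triple_iff.1 (isGreatest_branchPoint x y z)
  set m := branchPoint x y z
  have hm' : m ≤ x ∨ m ≤ y := by
    rcases hm with h | h | h <;> rw [h]
    exacts [Or.inl inf_le_left, Or.inl inf_le_left, Or.inr inf_le_left]
  refine branchPoint_eq_of_isGreatest <|
    isGreatest_triple_iff.2 ⟨?_, hxy, inf_le_right, inf_le_right⟩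
  rcases hm' with h | h
  · exact Or.inr (Or.inl (inf_eq_right.2 h).symm)
  · exact Or.inr (Or.inr (inf_eq_right.2 h).symm)

theorem branchPoint_eq_of_not_inf_le (hac : a ⊓ c ≤ a ⊓ b) (hbc : b ⊓ c ≤ a ⊓ b)
    (had : ¬ a ⊓ d ≤ a ⊓ b) : branchPoint b c d = a ⊓ b := by
  have hlt : a ⊓ b < a ⊓ d :=
    lt_of_le_not_ge ((le_total_of_le inf_le_left inf_le_left).resolve_left had) had
  have hbd : b ⊓ d = a ⊓ b := inf_eq_of_inf_lt hlt
  have hcd : c ⊓ d = a ⊓ c := inf_eq_of_inf_lt (hac.trans_lt hlt)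
  exact branchPoint_eq_of_isGreatest <|
    isGreatest_triple_iff.2 ⟨Or.inr (Or.inl hbd.symm), hbc, hbd.le, hcd ▸ hac⟩

theorem branchPoint_fourPoint_of_eq_inf (h : branchPoint a b c = a ⊓ b) :
    branchPoint a b c = branchPoint a b d ∨ branchPoint a b c = branchPoint a c d ∨
      branchPoint a b c = branchPoint b c d := by
  obtain ⟨-, -, hac, hbc⟩ := isGreatest_triple_iff.1 (h ▸ isGreatest_branchPoint a b c)
  rw [h]
  by_cases had : a ⊓ d ≤ a ⊓ b
  · by_cases hbd : b ⊓ d ≤ a ⊓ b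
    · exact Or.inl (branchPoint_eq_of_isGreatest <|
        isGreatest_triple_iff.2 ⟨Or.inl rfl, le_rfl, had, hbd⟩).symm
    · rw [inf_comm a b] at hac hbc hbd ⊢
      exact Or.inr (Or.inl (branchPoint_eq_of_not_inf_le hbc hac hbd).symm)
  · exact Or.inr (Or.inr (branchPoint_eq_of_not_inf_le hac hbc had).symm)

theorem branchPoint_fourPoint (a b c d : α) :
    branchPoint a b c = branchPoint a b d ∨ branchPoint a b c = branchPoint a c d ∨
      branchPoint a b c = branchPoint b c d := by
  obtain ⟨hm, -⟩ := isGreatest_triple_iff.1 (isGreatest_branchPoint a b c)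
  rcases hm with h | h | h
  · exact branchPoint_fourPoint_of_eq_inf h
  · rw [branchPoint_comm_right] at h ⊢
    have := branchPoint_fourPoint_of_eq_inf (d := d) h
    rw [branchPoint_comm c b d] at this
    tauto
  · rw [branchPoint_comm, branchPoint_comm_right] at h ⊢
    have := branchPoint_fourPoint_of_eq_inf (d := d) h
    rw [branchPoint_comm b a d, branchPoint_comm c a d] at this
    tauto

end IsMeetTree

/-- A partially ordered algebraic tree `(T, c_∧)` induces an algebraic tree:
the map `c(x,y,z)` defined as the maximum (w.r.t. the order `x ≤ y ↔ x = c_∧ x y`)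
of the three pairwise minima satisfies (2pc), (3pc) and (4pc). -/
theorem partially_ordered_tree_to_algebraic_tree {T : Type*} (cw : T → T → T)
    (hsym : ∀ x y : T, cw x y = cw y x)
    (hM1 : ∀ x : T, cw x x = x)
    (hM2 : ∀ x y z : T, cw x (cw y z) = cw (cw x y) z)
    (hM3 : ∀ x y z : T,
      (cw x y = cw x z ∨ cw x y = cw y z ∨ cw x z = cw y z) ∧
      (cw x y = cw x z → cw x y = cw (cw x y) (cw y z))) :
    ∃ c : T → T → T → T,
      (∀ x y z : T,
        c x y z ∈ ({cw x y, cw x z, cw y z} : Set T) ∧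
        cw x y = cw (cw x y) (c x y z) ∧
        cw x z = cw (cw x z) (c x y z) ∧
        cw y z = cw (cw y z) (c x y z)) ∧
      (∀ x y z : T, c x y z = c y x z ∧ c x y z = c x z y) ∧
      (∀ x y : T, c x y y = y) ∧
      (∀ x y z : T, c x y (c x y z) = c x y z) ∧
      (∀ x1 x2 x3 x4 : T,
        c x1 x2 x3 = c x1 x2 x4 ∨ c x1 x2 x3 = c x1 x3 x4 ∨
          c x1 x2 x3 = c x2 x3 x4) := by
  let : Min T := ⟨cw⟩
  let : SemilatticeInf T := SemilatticeInf.mk' hsym (fun x y z => (hM2 x y z).symm) hM1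
  have : IsMeetTree T := ⟨fun x y z => (hM3 x y z).1⟩
  refine ⟨branchPoint, fun x y z => ?_, fun x y z => ⟨branchPoint_comm x y z,
    branchPoint_comm_right x y z⟩, branchPoint_self_right, branchPoint_branchPoint,
    branchPoint_fourPoint⟩
  obtain ⟨-, hxy, hxz, hyz⟩ := isGreatest_triple_iff.1 (isGreatest_branchPoint x y z)
  exact ⟨(isGreatest_branchPoint x y z).1,
    left_eq_inf.2 hxy, left_eq_inf.2 hxz, left_eq_inf.2 hyz⟩
end

section
/- Let two finite measures ξ, ξ' on an algebraic tree (T,c), each finite on intervals, induce pseudometrics r_ξ, r_{ξ'} as r_ξ(x,y) := ξ([x,y]) − ½ξ({x}) − ½ξ({y}). If ξ([x,y]) > 0 whenever x ≠ y, then r_ξ is a metric on T. -/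
/-!
Intervals of an algebraic tree behave like geodesic segments. For the median `m = c x y z`
one has `[x,z] ⊆ [x,m] ∪ [m,z]`, `[x,m] ⊆ [x,y]` and `[m,z] \ {m} ⊆ [y,z] \ {y}`, so
`ξ[x,z] + ξ{y} ≤ ξ[x,y] + ξ[y,z]`; subtracting the point masses gives the triangle inequality
for `r_ξ`. The component topology is T₁, so points are measurable and `ξ{x} + ξ{y} ≤ ξ[x,y]`
for `x ≠ y`, i.e. `r_ξ(x,y) ≥ ξ[x,y] / 2 > 0`.
-/

open MeasureTheory

structure IsAlgebraicTree {T : Type*} (c : T → T → T → T) : Prop where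
  symm : ∀ x y z : T, c x y z = c y x z ∧ c x y z = c x z y
  two_pc : ∀ x y : T, c x y y = y
  three_pc : ∀ x y z : T, c x y (c x y z) = c x y z
  four_pc : ∀ x1 x2 x3 x4 : T,
    c x1 x2 x3 = c x1 x2 x4 ∨ c x1 x2 x3 = c x1 x3 x4 ∨ c x1 x2 x3 = c x2 x3 x4

namespace AlgebraicTree

variable {T : Type*}

def interval (c : T → T → T → T) (x y : T) : Set T := {z | c x y z = z}

abbrev componentTopology (c : T → T → T → T) : TopologicalSpace T :=
  TopologicalSpace.generateFrom {S | ∃ x y : T, x ≠ y ∧ S = {z | z ≠ x ∧ c x z y ≠ x}}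

theorem t1Space_componentTopology {c : T → T → T → T} (h2pc : ∀ x y : T, c x y y = y) :
    @T1Space T (componentTopology c) := by
  let := componentTopology c
  refine ⟨fun y => isOpen_compl_iff.mp ?_⟩
  have hcompl : ({y}ᶜ : Set T) = ⋃ z ∈ {z : T | z ≠ y}, {w | w ≠ y ∧ c y w z ≠ y} := by
    ext w
    simp only [Set.mem_compl_iff, Set.mem_singleton_iff, Set.mem_iUnion, Set.mem_ofPred_eq,
      exists_prop]
    exact ⟨fun hw => ⟨w, hw, hw, by rwa [h2pc]⟩, fun ⟨_, _, hw, _⟩ => hw⟩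
  rw [hcompl]
  exact isOpen_biUnion fun z hz =>
    TopologicalSpace.isOpen_generateFrom_of_mem ⟨y, z, Ne.symm hz, rfl⟩

noncomputable def rxi [MeasurableSpace T] (ξ : Measure T) (c : T → T → T → T) (x y : T) : ℝ :=
  (ξ (interval c x y)).toReal - (ξ {x}).toReal / 2 - (ξ {y}).toReal / 2

end AlgebraicTree

open AlgebraicTree

namespace IsAlgebraicTree

variable {T : Type*} {c : T → T → T → T} (hc : IsAlgebraicTree c)
include hc

theorem self_self_apply (x z : T) : c x x z = x := by
  rcases hc.four_pc x x z x with h | h | h <;>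
    simp only [h, (hc.symm x z x).1, hc.two_pc]

theorem left_mem_interval (x y : T) : x ∈ interval c x y := by
  rw [interval, Set.mem_ofPred_eq, (hc.symm x y x).2]
  exact hc.self_self_apply x y

theorem right_mem_interval (x y : T) : y ∈ interval c x y := hc.two_pc x y

theorem interval_self (x : T) : interval c x x = {x} := by
  ext z
  simp only [interval, Set.mem_ofPred_eq, Set.mem_singleton_iff, hc.self_self_apply, eq_comm]

theorem interval_comm (x y : T) : interval c x y = interval c y x := by
  ext z
  simp only [interval, Set.mem_ofPred_eq, (hc.symm x y z).1]

theorem median_mem_interval_left (x y z : T) : c x y z ∈ interval c x y := hc.three_pc x y z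

theorem median_mem_interval_outer (x y z : T) : c x y z ∈ interval c x z := by
  rw [interval, Set.mem_ofPred_eq, (hc.symm x y z).2]
  exact hc.three_pc x z y

theorem median_mem_interval_right (x y z : T) : c x y z ∈ interval c y z := by
  have h : c x y z = c y z x := by rw [(hc.symm x y z).1, (hc.symm y x z).2]
  rw [interval, Set.mem_ofPred_eq, h]
  exact hc.three_pc y z x

theorem eq_of_mem_interval_of_mem_interval {x a b : T} (hb : b ∈ interval c x a)
    (ha : a ∈ interval c x b) : a = b := by
  rcases hc.four_pc x a b a with h | h | h
  · rw [hb, hc.two_pc] at h; exact h.symm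
  · rw [hb, ha] at h; exact h.symm
  · rw [hb, (hc.symm a b a).2, hc.self_self_apply] at h; exact h.symm

theorem interval_subset_interval {x y v : T} (hv : v ∈ interval c x y) :
    interval c x v ⊆ interval c x y := by
  intro w (hw : c x v w = w)
  show c x y w = w
  have hmed := hc.median_mem_interval_outer x y w
  rcases hc.four_pc x y w v with h | h | h
  · rw [hv] at h
    rw [h] at hmed
    rw [h, hc.eq_of_mem_interval_of_mem_interval hmed hw]
  · rwa [(hc.symm x w v).2, hw] at h
  · have hmed_vw : c x y w ∈ interval c v w := by
      have e : c y w v = c v w y := by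
        rw [(hc.symm y w v).1, (hc.symm w y v).2, (hc.symm w v y).1]
      rw [interval, Set.mem_ofPred_eq, h, e]
      exact hc.three_pc v w y
    rcases hc.four_pc x v w (c x y w) with h' | h' | h'
    · rw [hw] at h'
      have hw' : w ∈ interval c x (c x y w) := by
        have := hc.median_mem_interval_outer x v (c x y w)
        rwa [← h'] at this
      exact hc.eq_of_mem_interval_of_mem_interval hw' hmed
    · rw [hw, hmed] at h'; exact h'.symm
    · rw [hw, hmed_vw] at h'; exact h'.symm

theorem interval_subset_union_median (x y z : T) :
    interval c x z ⊆ interval c x (c x y z) ∪ (interval c (c x y z) z \ {c x y z}) := by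
  intro w (hw : c x z w = w)
  by_cases hwm : w = c x y z
  · exact Or.inl (hwm ▸ hc.right_mem_interval x _)
  rcases hc.four_pc x z w (c x y z) with h | h | h
  · rw [hc.median_mem_interval_outer x y z, hw] at h
    exact absurd h hwm
  · left
    change c x (c x y z) w = w
    rw [(hc.symm x (c x y z) w).2, ← h, hw]
  · right
    refine ⟨?_, hwm⟩
    change c (c x y z) z w = w
    rw [(hc.symm (c x y z) z w).1, (hc.symm z (c x y z) w).2, ← h, hw]

theorem interval_median_diff_subset (x y z : T) :
    interval c (c x y z) z \ {c x y z} ⊆ interval c y z \ {y} := by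
  rintro w ⟨hw, hwm⟩
  have hm : c x y z ∈ interval c z y := hc.interval_comm y z ▸ hc.median_mem_interval_right x y z
  have hw' : w ∈ interval c z (c x y z) := hc.interval_comm _ _ ▸ hw
  refine ⟨hc.interval_comm z y ▸ hc.interval_subset_interval hm hw', ?_⟩
  rintro rfl
  exact hwm (hc.eq_of_mem_interval_of_mem_interval hm hw')

variable [MeasurableSpace T] {ξ : Measure T}

theorem rxi_comm (x y : T) : rxi ξ c x y = rxi ξ c y x := by
  rw [rxi, rxi, hc.interval_comm]
  ring

theorem rxi_self (x : T) : rxi ξ c x x = 0 := by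
  rw [rxi, hc.interval_self]
  ring

theorem measure_singleton_ne_top (hfin : ∀ x y : T, ξ (interval c x y) ≠ ⊤) (x : T) :
    ξ {x} ≠ ⊤ :=
  hc.interval_self x ▸ hfin x x

theorem measure_singleton_add_measure_singleton_le [MeasurableSingletonClass T] {x y : T}
    (hxy : x ≠ y) : ξ {x} + ξ {y} ≤ ξ (interval c x y) := by
  rw [← measure_union (Set.disjoint_singleton.mpr hxy) (measurableSet_singleton y)]
  exact measure_mono (Set.union_subset_iff.mpr
    ⟨Set.singleton_subset_iff.mpr (hc.left_mem_interval x y),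
      Set.singleton_subset_iff.mpr (hc.right_mem_interval x y)⟩)

theorem rxi_eq_zero_iff [MeasurableSingletonClass T] (hfin : ∀ x y : T, ξ (interval c x y) ≠ ⊤)
    (hpos : ∀ x y : T, x ≠ y → 0 < ξ (interval c x y)) {x y : T} :
    rxi ξ c x y = 0 ↔ x = y := by
  refine ⟨fun h => ?_, fun h => h ▸ hc.rxi_self x⟩
  by_contra hxy
  have hsing_fin := hc.measure_singleton_ne_top hfin
  have hle := hc.measure_singleton_add_measure_singleton_le (ξ := ξ) hxy
  rw [← ENNReal.toReal_le_toReal (ENNReal.add_ne_top.mpr ⟨hsing_fin x, hsing_fin y⟩) (hfin x y),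
    ENNReal.toReal_add (hsing_fin x) (hsing_fin y)] at hle
  have hpos' := ENNReal.toReal_pos (hpos x y hxy).ne' (hfin x y)
  rw [rxi] at h
  linarith

theorem measure_interval_add_measure_singleton_le [MeasurableSingletonClass T] (x y z : T) :
    ξ (interval c x z) + ξ {y} ≤ ξ (interval c x y) + ξ (interval c y z) := by
  set m := c x y z
  calc ξ (interval c x z) + ξ {y}
      ≤ ξ (interval c x m) + ξ (interval c m z \ {m}) + ξ {y} := by
        gcongr
        exact (measure_mono (hc.interval_subset_union_median x y z)).trans (measure_union_le _ _)
    _ ≤ ξ (interval c x y) + (ξ (interval c y z \ {y}) + ξ {y}) := by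
        rw [add_assoc]
        exact add_le_add
          (measure_mono (hc.interval_subset_interval (hc.median_mem_interval_left x y z)))
          (add_le_add_left (measure_mono (hc.interval_median_diff_subset x y z)) _)
    _ = ξ (interval c x y) + ξ (interval c y z) := by
        rw [add_comm (ξ (interval c y z \ {y})),
          measure_add_sdiff (measurableSet_singleton y).nullMeasurableSet,
          Set.union_eq_self_of_subset_left
            (Set.singleton_subset_iff.mpr (hc.left_mem_interval y z))]

theorem rxi_triangle [MeasurableSingletonClass T] (hfin : ∀ x y : T, ξ (interval c x y) ≠ ⊤)
    (x y z : T) : rxi ξ c x z ≤ rxi ξ c x y + rxi ξ c y z := by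
  have hsing_fin := hc.measure_singleton_ne_top hfin y
  have hle := hc.measure_interval_add_measure_singleton_le (ξ := ξ) x y z
  rw [← ENNReal.toReal_le_toReal (ENNReal.add_ne_top.mpr ⟨hfin x z, hsing_fin⟩)
      (ENNReal.add_ne_top.mpr ⟨hfin x y, hfin y z⟩),
    ENNReal.toReal_add (hfin x z) hsing_fin, ENNReal.toReal_add (hfin x y) (hfin y z)] at hle
  simp only [rxi]
  linarith

end IsAlgebraicTree

/-- If the measure `ξ` on an algebraic tree is finite on intervals and gives
positive mass to every interval `[x,y]` with `x ≠ y`, then the pseudometric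
`r_ξ` is a metric. -/
theorem rxi_is_metric {T : Type*} (c : T → T → T → T)
    (hsym : ∀ x y z : T, c x y z = c y x z ∧ c x y z = c x z y)
    (h2pc : ∀ x y : T, c x y y = y)
    (h3pc : ∀ x y z : T, c x y (c x y z) = c x y z)
    (h4pc : ∀ x1 x2 x3 x4 : T,
      c x1 x2 x3 = c x1 x2 x4 ∨ c x1 x2 x3 = c x1 x3 x4 ∨ c x1 x2 x3 = c x2 x3 x4)
    [m : MeasurableSpace T]
    (hm : m = @borel T (TopologicalSpace.generateFrom
      {S : Set T | ∃ x y : T, x ≠ y ∧ S = {z : T | z ≠ x ∧ c x z y ≠ x}}))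
    (ξ : Measure T)
    (hfin : ∀ x y : T, ξ {z : T | c x y z = z} < ⊤)
    (hpos : ∀ x y : T, x ≠ y → 0 < ξ {z : T | c x y z = z}) :
    (∀ x y : T,
      (ξ {z : T | c x y z = z}).toReal - (ξ {x}).toReal / 2 - (ξ {y}).toReal / 2 = 0
        ↔ x = y) ∧
    (∀ x y : T,
      (ξ {z : T | c x y z = z}).toReal - (ξ {x}).toReal / 2 - (ξ {y}).toReal / 2 =
      (ξ {z : T | c y x z = z}).toReal - (ξ {y}).toReal / 2 - (ξ {x}).toReal / 2) ∧
    (∀ x y z : T,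
      (ξ {w : T | c x z w = w}).toReal - (ξ {x}).toReal / 2 - (ξ {z}).toReal / 2 ≤
      ((ξ {w : T | c x y w = w}).toReal - (ξ {x}).toReal / 2 - (ξ {y}).toReal / 2) +
      ((ξ {w : T | c y z w = w}).toReal - (ξ {y}).toReal / 2 - (ξ {z}).toReal / 2)) := by
  have hc : IsAlgebraicTree c := ⟨hsym, h2pc, h3pc, h4pc⟩
  let := componentTopology c
  have : BorelSpace T := ⟨hm⟩
  have := t1Space_componentTopology h2pc
  have hfin' (x y : T) : ξ (interval c x y) ≠ ⊤ := (hfin x y).ne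
  exact ⟨fun x y => hc.rxi_eq_zero_iff hfin' hpos, hc.rxi_comm, hc.rxi_triangle hfin'⟩
end
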